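/- For each positive integer n, if n = ε_1·M_1 + ε_2·M_2 + ... + ε_ℓ·M_ℓ is the M-expansion of n, then s(n) = ε_1·μ_1 + ε_2·μ_2 + ... + ε_ℓ·μ_ℓ. -/

import Mathlib

/-!
Since `A_{k+1} = A_k ++ A_k ++ [1]` and `A_k` has length `M_k`, the first `M_k` terms of `a`
form `A_k`. Hence `s(M_k) = sum A_k = 3·2^k - 1 = μ_k`, and for `0 ≤ r ≤ M_k` the first
`M_k + r` terms are `A_k` followed by the first `r` terms again, so `s(M_k + r) = s(M_k) + s(r)`.
The greedy step writes `n = M_ℓ + r` with `0 ≤ r ≤ M_ℓ`, so any `g` with `g 0 = 0` and this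
splitting property satisfies `g n = Σ ε_i g(M_i)`, by strong induction on `n`.
-/

/-- `Alist k` is the list `A_{k+1}`: `A_1 = [5]`, `A_{k+1} = A_k ++ A_k ++ [1]`. -/
def Alist : ℕ → List ℕ
  | 0 => [5]
  | k+1 => Alist k ++ Alist k ++ [1]

/-- `aseq n` is the `n`-th term (1-indexed) of the limit of the lists `A_k`;
`aseq 0 = 0` by convention. -/
def aseq (n : ℕ) : ℕ := (Alist n).getD (n - 1) 0

/-- Partial sums: `s n = a_1 + ⋯ + a_n`, `s 0 = 0`. -/
def s (n : ℕ) : ℕ := ∑ i ∈ Finset.Icc 1 n, aseq i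

/-- The largest `ℓ` with `2^ℓ - 1 ≤ n` (for `n ≥ 1`). -/
def maxM (n : ℕ) : ℕ := Nat.findGreatest (fun ℓ => 2 ^ ℓ - 1 ≤ n) n

/-- `Mdig n i` is the digit `ε_i` in the greedy M-expansion
`n = ε_1·M_1 + ⋯ + ε_ℓ·M_ℓ` (with `M_i = 2^i - 1`): repeatedly subtract the
largest Mersenne number `M_ℓ ≤ n`, recording a digit `2` if the remainder
equals `M_ℓ` again. -/
def Mdig (n : ℕ) : ℕ → ℕ :=
  if h : n = 0 then fun _ => 0
  else
    let ℓ := maxM n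
    let r := n - (2 ^ ℓ - 1)
    if r = 2 ^ ℓ - 1 then fun i => if i = ℓ then 2 else 0
    else fun i => (if i = ℓ then 1 else 0) + Mdig r i
termination_by n
decreasing_by
  have h1 : 1 ≤ maxM n :=
    Nat.le_findGreatest (Nat.one_le_iff_ne_zero.mpr h) (by simpa using Nat.one_le_iff_ne_zero.mpr h)
  have h2 : 2 ≤ 2 ^ maxM n := by
    calc (2 : ℕ) = 2 ^ 1 := rfl
    _ ≤ 2 ^ maxM n := Nat.pow_le_pow_right (by norm_num) h1
  have h3 : 1 ≤ n := Nat.one_le_iff_ne_zero.mpr h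
  omega

/-- Sum of the M-digits of `n` (all nonzero digits have index `≤ n`). -/
def sigmaM (n : ℕ) : ℕ := ∑ i ∈ Finset.Icc 1 n, Mdig n i

theorem Alist_length (k : ℕ) : (Alist k).length = 2 ^ (k + 1) - 1 := by
  induction k with
  | zero => rfl
  | succ k ih =>
    have : 1 ≤ 2 ^ (k + 1) := Nat.one_le_two_pow
    simp only [Alist, List.length_append, ih, List.length_singleton, pow_succ]
    omega

theorem Alist_prefix {k m : ℕ} (h : k ≤ m) : Alist k <+: Alist m := by
  induction m, h using Nat.le_induction with
  | base => exact List.prefix_refl _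
  | succ m _ ih => exact ih.trans ((List.prefix_append _ _).trans (List.prefix_append _ _))

theorem aseq_succ {n k : ℕ} (h : n < (Alist k).length) : aseq (n + 1) = (Alist k)[n] := by
  have hn : n < (Alist (n + 1)).length := by
    rw [Alist_length]
    have := Nat.lt_two_pow_self (n := n + 1 + 1)
    omega
  rw [aseq, Nat.add_sub_cancel, List.getD_eq_getElem (hn := hn)]
  rcases le_total k (n + 1) with hk | hk
  · exact ((Alist_prefix hk).getElem h).symm
  · exact (Alist_prefix hk).getElem _

theorem s_eq_sum_take {n k : ℕ} (h : n ≤ (Alist k).length) : s n = ((Alist k).take n).sum := by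
  induction n with
  | zero => rfl
  | succ n ih =>
    rw [s, Finset.sum_Icc_succ_top (Nat.le_add_left 1 n), ← s, ih (by omega),
      List.sum_take_succ _ _ h, aseq_succ h]

theorem Alist_sum (k : ℕ) : (Alist k).sum = 3 * 2 ^ (k + 1) - 1 := by
  induction k with
  | zero => rfl
  | succ k ih =>
    have : 1 ≤ 2 ^ (k + 1) := Nat.one_le_two_pow
    simp only [Alist, List.sum_append, ih, List.sum_singleton, pow_succ]
    omega

theorem s_two_pow_sub_one {k : ℕ} (hk : 1 ≤ k) : s (2 ^ k - 1) = 2 ^ (k + 1) + 2 ^ k - 1 := by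
  obtain ⟨m, rfl⟩ := Nat.exists_eq_add_of_le' hk
  rw [← Alist_length, s_eq_sum_take le_rfl, List.take_length, Alist_sum]
  ring_nf

theorem s_two_pow_sub_one_add {k r : ℕ} (hk : 1 ≤ k) (hr : r ≤ 2 ^ k - 1) :
    s (2 ^ k - 1 + r) = s (2 ^ k - 1) + s r := by
  obtain ⟨m, rfl⟩ := Nat.exists_eq_add_of_le' hk
  rw [← Alist_length] at hr ⊢
  have hlen : (Alist m).length + r ≤ (Alist (m + 1)).length := by
    simp only [Alist, List.length_append]; omega
  rw [s_eq_sum_take hlen, s_eq_sum_take le_rfl, s_eq_sum_take hr, List.take_length, Alist,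
    List.append_assoc, List.take_append, List.take_of_length_le (by omega), List.sum_append,
    Nat.add_sub_cancel_left, List.take_append_of_le_length hr]

theorem one_le_maxM {n : ℕ} (hn : n ≠ 0) : 1 ≤ maxM n :=
  Nat.le_findGreatest (Nat.one_le_iff_ne_zero.mpr hn) (by simpa using Nat.one_le_iff_ne_zero.mpr hn)

theorem two_pow_maxM_sub_one_le {n : ℕ} (hn : n ≠ 0) : 2 ^ maxM n - 1 ≤ n :=
  Nat.findGreatest_spec (P := fun ℓ => 2 ^ ℓ - 1 ≤ n) (m := 1)
    (Nat.one_le_iff_ne_zero.mpr hn) (by simpa using Nat.one_le_iff_ne_zero.mpr hn)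

theorem sub_two_pow_maxM_le (n : ℕ) : n - (2 ^ maxM n - 1) ≤ 2 ^ maxM n - 1 := by
  have hmax : ¬ 2 ^ (maxM n + 1) - 1 ≤ n := fun h => by
    have := Nat.lt_two_pow_self (n := maxM n + 1)
    have hle : maxM n + 1 ≤ n := by omega
    exact Nat.not_succ_le_self _ (Nat.le_findGreatest hle h)
  rw [pow_succ] at hmax
  omega

theorem Mdig_eq_zero_of_lt {n i : ℕ} (h : n < i) : Mdig n i = 0 := by
  induction n using Nat.strong_induction_on with
  | _ n ih =>
    rcases eq_or_ne n 0 with rfl | hn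
    · simp [Mdig]
    have hℓ : maxM n < i := (Nat.findGreatest_le n).trans_lt h
    have hM : 1 ≤ 2 ^ maxM n - 1 := by
      have := Nat.pow_le_pow_right two_pos (one_le_maxM hn); omega
    rw [Mdig, dif_neg hn]
    split
    · simp [hℓ.ne']
    · simp only [if_neg hℓ.ne', zero_add]
      exact ih _ (by omega) (by omega)

theorem sum_Mdig_mul_of_le {n m : ℕ} (h : n ≤ m) (f : ℕ → ℕ) :
    ∑ i ∈ Finset.Icc 1 m, Mdig n i * f i = ∑ i ∈ Finset.Icc 1 n, Mdig n i * f i := by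
  refine (Finset.sum_subset (Finset.Icc_subset_Icc_right h) fun i hi hin => ?_).symm
  simp only [Finset.mem_Icc] at hi hin
  rw [Mdig_eq_zero_of_lt (by omega), zero_mul]

theorem sum_Mdig_mul_of_ne_zero {n : ℕ} (hn : n ≠ 0) (f : ℕ → ℕ) :
    ∑ i ∈ Finset.Icc 1 n, Mdig n i * f i =
      if n - (2 ^ maxM n - 1) = 2 ^ maxM n - 1 then 2 * f (maxM n)
      else f (maxM n) + ∑ i ∈ Finset.Icc 1 (n - (2 ^ maxM n - 1)),
        Mdig (n - (2 ^ maxM n - 1)) i * f i := by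
  have hmem : maxM n ∈ Finset.Icc 1 n := Finset.mem_Icc.mpr ⟨one_le_maxM hn, Nat.findGreatest_le n⟩
  rw [Mdig, dif_neg hn]
  split
  · simp [ite_mul, hmem]
  · simp only [add_mul, ite_mul, one_mul, zero_mul, Finset.sum_add_distrib, Finset.sum_ite_eq',
      if_pos hmem, sum_Mdig_mul_of_le (Nat.sub_le n _)]

theorem eq_sum_Mdig_mul (g : ℕ → ℕ) (h0 : g 0 = 0)
    (hadd : ∀ k r, 1 ≤ k → r ≤ 2 ^ k - 1 → g (2 ^ k - 1 + r) = g (2 ^ k - 1) + g r) (n : ℕ) :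
    g n = ∑ i ∈ Finset.Icc 1 n, Mdig n i * g (2 ^ i - 1) := by
  induction n using Nat.strong_induction_on with
  | _ n ih =>
    rcases eq_or_ne n 0 with rfl | hn
    · simp [h0]
    set M := 2 ^ maxM n - 1
    have hM : 1 ≤ M := by
      have := Nat.pow_le_pow_right two_pos (one_le_maxM hn); omega
    have hsplit : g n = g M + g (n - M) := by
      rw [← hadd _ _ (one_le_maxM hn) (sub_two_pow_maxM_le n),
        Nat.add_sub_cancel' (two_pow_maxM_sub_one_le hn)]
    rw [sum_Mdig_mul_of_ne_zero hn, hsplit]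
    split_ifs with hr
    · rw [hr, two_mul]
    · rw [← ih _ (by omega)]

theorem s_eq_mu_expansion_general (n : ℕ) :
    s n = ∑ i ∈ Finset.Icc 1 n, Mdig n i * (2 ^ (i + 1) + 2 ^ i - 1) := by
  rw [eq_sum_Mdig_mul s rfl (fun _ _ hk hr => s_two_pow_sub_one_add hk hr) n]
  exact Finset.sum_congr rfl fun i hi => by rw [s_two_pow_sub_one (Finset.mem_Icc.mp hi).1]

/-- If `n = ε_1·M_1 + ⋯ + ε_ℓ·M_ℓ` is the M-expansion of `n`, then
`s(n) = ε_1·μ_1 + ⋯ + ε_ℓ·μ_ℓ`, where `μ_i = 2^{i+1} + 2^i − 1`. -/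
theorem s_eq_mu_expansion (n : ℕ) (hn : 1 ≤ n) :
    s n = ∑ i ∈ Finset.Icc 1 n, Mdig n i * (2 ^ (i + 1) + 2 ^ i - 1) :=
  s_eq_mu_expansion_general n
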